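/- Let Q be a quiver that is the disjoint union of two subquivers S and T (no vertices or arrows in common, and no arrows between them), and let M be a representation of Q over a field K with ordered basis B. Then for every subset β ⊆ B, the map V ↦ ((V_p)_{p∈S0}, (V_p)_{p∈T0}) is a bijection from the Schubert cell C_β^M onto the product C_{β_S}^{M_S} × C_{β_T}^{M_T}, where M_S, M_T are the restrictions of M to S, T and β_S = β ∩ M_S, β_T = β ∩ M_T. -/

import Mathlib

open scoped Classical

noncomputable section

namespace QGr

/-- A representation of the quiver with vertex set `V0` and arrow set `A`
(source and target maps are part of the data), given in coordinates with respect to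
an ordered basis `B`: the basis element `b : B` sits at the vertex `vtx b`, the space
at the vertex `p` is `{b : B // vtx b = p} → K`, and `mmap a` is the map attached to
the arrow `a`. -/
structure Rep (K : Type) [Field K] (V0 A B : Type) where
  src : A → V0
  tgt : A → V0
  vtx : B → V0
  mmap : ∀ a : A, ({b : B // vtx b = src a} → K) → ({b : B // vtx b = tgt a} → K)

namespace Rep

variable {K : Type} [Field K] {V0 A B : Type}

/-- A collection of subspaces, one at each vertex. -/
def SubRep (R : Rep K V0 A B) : Type :=
  ∀ p : V0, Submodule K ({b : B // R.vtx b = p} → K)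

/-- The collection `W` is a subrepresentation. -/
def IsSubrep (R : Rep K V0 A B) (W : R.SubRep) : Prop :=
  ∀ a : A, ∀ x ∈ W (R.src a), R.mmap a x ∈ W (R.tgt a)

/-- All structure maps are `K`-linear. -/
def Linear (R : Rep K V0 A B) : Prop := ∀ a : A, IsLinearMap K (R.mmap a)

/-- Membership in the Schubert cell attached to `β ⊆ B`: each `W p` is spanned by vectors
`v b₀ = b₀ + ∑ λ_{b',b₀} b'` (`b₀ ∈ β ∩ B_p`), the sum over `b' < b₀` with `b' ∉ β`. -/
def InCell [LinearOrder B] (R : Rep K V0 A B) (β : Finset B) (W : R.SubRep) : Prop :=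
  ∀ p : V0, ∃ v : {b : B // b ∈ β ∧ R.vtx b = p} → ({b : B // R.vtx b = p} → K),
    (∀ b0, v b0 ⟨b0.val, b0.prop.2⟩ = 1) ∧
    (∀ b0 b1, b1.val ≠ b0.val → ¬(b1.val < b0.val ∧ b1.val ∉ β) → v b0 b1 = 0) ∧
    W p = Submodule.span K (Set.range v)

/-- The Schubert cell `C_β^M`. -/
def Cell [LinearOrder B] (R : Rep K V0 A B) (β : Finset B) : Set R.SubRep :=
  {W | R.IsSubrep W ∧
    (∀ p : V0, Module.finrank K (W p) = (β.filter fun b => R.vtx b = p).card) ∧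
    R.InCell β W}

/-- The quiver Grassmannian `Gr_e(M)`. -/
def Gr (R : Rep K V0 A B) (e : V0 → ℕ) : Set R.SubRep :=
  {W | R.IsSubrep W ∧ ∀ p : V0, Module.finrank K (W p) = e p}

/-- Collections of subspaces indexed by the vertices in `S0`. -/
def SubRepOn (R : Rep K V0 A B) (S0 : Set V0) : Type :=
  ∀ p : {p : V0 // p ∈ S0}, Submodule K ({b : B // R.vtx b = ↑p} → K)

/-- Subrepresentation condition over the subquiver `(S0, S1)`. -/
def IsSubrepOn (R : Rep K V0 A B) (S0 : Set V0) (S1 : Set A) (W : R.SubRepOn S0) : Prop :=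
  ∀ a : A, a ∈ S1 → ∀ (h1 : R.src a ∈ S0) (h2 : R.tgt a ∈ S0),
    ∀ x ∈ W ⟨R.src a, h1⟩, R.mmap a x ∈ W ⟨R.tgt a, h2⟩

/-- Cell membership over the vertices in `S0`. -/
def InCellOn [LinearOrder B] (R : Rep K V0 A B) (S0 : Set V0) (β : Finset B)
    (W : R.SubRepOn S0) : Prop :=
  ∀ p : {p : V0 // p ∈ S0},
    ∃ v : {b : B // b ∈ β ∧ R.vtx b = ↑p} → ({b : B // R.vtx b = ↑p} → K),
      (∀ b0, v b0 ⟨b0.val, b0.prop.2⟩ = 1) ∧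
      (∀ b0 b1, b1.val ≠ b0.val → ¬(b1.val < b0.val ∧ b1.val ∉ β) → v b0 b1 = 0) ∧
      W p = Submodule.span K (Set.range v)

/-- The Schubert cell of the restriction of the representation to the subquiver `(S0, S1)`. -/
def CellOn [LinearOrder B] (R : Rep K V0 A B) (S0 : Set V0) (S1 : Set A) (β : Finset B) :
    Set (R.SubRepOn S0) :=
  {W | R.IsSubrepOn S0 S1 W ∧
    (∀ p : {p : V0 // p ∈ S0},
      Module.finrank K (W p) = (β.filter fun b => R.vtx b = ↑p).card) ∧
    R.InCellOn S0 β W}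

/-- The quiver Grassmannian of the restriction to the subquiver `(S0, S1)`. -/
def GrOn (R : Rep K V0 A B) (S0 : Set V0) (S1 : Set A) (e : V0 → ℕ) :
    Set (R.SubRepOn S0) :=
  {W | R.IsSubrepOn S0 S1 W ∧ ∀ p : {p : V0 // p ∈ S0}, Module.finrank K (W p) = e ↑p}

/-- Restriction of a collection of subspaces to the vertices in `S0`. -/
def resOn (R : Rep K V0 A B) (S0 : Set V0) (W : R.SubRep) : R.SubRepOn S0 :=
  fun p => W ↑p

/-- `p < q` for vertices: every basis element at `p` precedes every basis element at `q`. -/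
def vlt [LT B] (R : Rep K V0 A B) (p q : V0) : Prop :=
  ∀ b b' : B, R.vtx b = p → R.vtx b' = q → b < b'

def vle [LT B] (R : Rep K V0 A B) (p q : V0) : Prop := p = q ∨ R.vlt p q

/-- The matrix of `mmap a` with respect to the ordered bases at source and target is a
(square) identity matrix. -/
def IsIdMat [LinearOrder B] (R : Rep K V0 A B) (a : A) : Prop :=
  ∃ e : {b : B // R.vtx b = R.src a} ≃o {b : B // R.vtx b = R.tgt a},
    ∀ i, R.mmap a (Pi.single i 1) = Pi.single (e i) 1

/-- `mmap a` sends the basis vector `b0` to the basis vector `b1`. -/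
def MapsBasisTo (R : Rep K V0 A B) (a : A) (b0 b1 : B) : Prop :=
  ∃ (h0 : R.vtx b0 = R.src a) (h1 : R.vtx b1 = R.tgt a),
    R.mmap a (Pi.single ⟨b0, h0⟩ 1) = Pi.single ⟨b1, h1⟩ 1

/-- The ordered basis `B` is ordered above the subquiver `(S0, S1)`. -/
def OrderedAbove [LinearOrder B] (R : Rep K V0 A B) (S0 : Set V0) (S1 : Set A) : Prop :=
  (∀ b b' : B, R.vtx b ∈ S0 → R.vtx b' ∉ S0 → b < b') ∧
  (∀ p q : V0, p ≠ q → R.vlt p q ∨ R.vlt q p) ∧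
  (∀ (r : ℕ) (pa : Fin (r+1) → V0), pa 0 ∈ S0 → (∀ i, i ≠ 0 → pa i ∉ S0) →
    Function.Injective pa →
    (∀ i : Fin r, ∃ a : A, (R.src a = pa i.castSucc ∧ R.tgt a = pa i.succ) ∨
      (R.src a = pa i.succ ∧ R.tgt a = pa i.castSucc)) →
    ∀ i : Fin r, R.vlt (pa i.castSucc) (pa i.succ)) ∧
  (∀ a : A, a ∉ S1 → R.IsIdMat a)

end Rep

/-- The relation on the vertices of the subquiver with vertex set `T0` identifying all
vertices of `S0` with each other. -/
def treeRel {V0 : Type} (S0 T0 : Set V0) :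
    {v : V0 // v ∈ T0} → {v : V0 // v ∈ T0} → Prop :=
  fun x y => (↑x ∈ S0 ∧ ↑y ∈ S0)

/-- The subquiver `(T0, T1)` is a tree extension of the subquiver `(S0, S1)`:
the quotient quiver `T/S` (arrows of `T` not in `S`; vertices of `T` with all vertices of `S`
identified) is a tree, i.e. it is connected (as an undirected graph) and the number of its
edges is one less than the number of its vertices. -/
def IsTreeExtensionIn {V0 A : Type} (src tgt : A → V0) (T0 : Set V0) (T1 : Set A)
    (S0 : Set V0) (S1 : Set A) : Prop :=
  (∀ u v : Quot (treeRel S0 T0), Relation.ReflTransGen (fun u v =>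
      ∃ a : A, a ∈ T1 ∧ a ∉ S1 ∧ ∃ (hs : src a ∈ T0) (ht : tgt a ∈ T0),
        (Quot.mk (treeRel S0 T0) ⟨src a, hs⟩ = u ∧ Quot.mk (treeRel S0 T0) ⟨tgt a, ht⟩ = v) ∨
        (Quot.mk (treeRel S0 T0) ⟨src a, hs⟩ = v ∧ Quot.mk (treeRel S0 T0) ⟨tgt a, ht⟩ = u))
      u v) ∧
  Nat.card {a : A // a ∈ T1 ∧ a ∉ S1} + 1 = Nat.card (Quot (treeRel S0 T0))

/-- `T` (the full ambient quiver) is a tree extension of the subquiver `(S0, S1)`. -/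
def IsTreeExtension {V0 A : Type} (src tgt : A → V0) (S0 : Set V0) (S1 : Set A) : Prop :=
  IsTreeExtensionIn src tgt Set.univ Set.univ S0 S1

namespace Rep

variable {K : Type} [Field K] {V0 A B QV QA : Type}

/-- The structure map of the push-forward representation `F_*M` attached to the arrow `aq`
of the target quiver. -/
def pushMap [Fintype A] (R : Rep K V0 A B) (qsrc qtgt : QA → QV) (Fv : V0 → QV)
    (Fa : A → QA) (hFs : ∀ a : A, Fv (R.src a) = qsrc (Fa a)) (aq : QA)
    (x : {b : B // Fv (R.vtx b) = qsrc aq} → K) (c : {b : B // Fv (R.vtx b) = qtgt aq}) : K :=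
  ∑ α : A, if hα : Fa α = aq then
    (if hc : R.vtx c.val = R.tgt α then
      R.mmap α (fun b => x ⟨b.val, by rw [b.prop, hFs α, hα]⟩) ⟨c.val, hc⟩
    else 0) else 0

/-- The push-forward representation `F_*M` along the quiver morphism `F = (Fv, Fa)`. -/
def push [Fintype A] (R : Rep K V0 A B) (qsrc qtgt : QA → QV) (Fv : V0 → QV)
    (Fa : A → QA) (hFs : ∀ a : A, Fv (R.src a) = qsrc (Fa a)) : Rep K QV QA B where
  src := qsrc
  tgt := qtgt
  vtx := fun b => Fv (R.vtx b)
  mmap := R.pushMap qsrc qtgt Fv Fa hFs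

/-- The push-forward `F_*V` of a collection of subspaces: at the vertex `q` of `Q` it consists
of all vectors whose component in each `M_p` with `Fv p = q` lies in `V_p`. -/
def pushSub (R : Rep K V0 A B) (Fv : V0 → QV) (W : R.SubRep) :
    ∀ q : QV, Submodule K ({b : B // Fv (R.vtx b) = q} → K) := fun q =>
  { carrier := {x | ∀ (p : V0) (hq : Fv p = q),
      (fun b : {b : B // R.vtx b = p} =>
        x ⟨b.val, by rw [b.prop]; exact hq⟩) ∈ W p}
    add_mem' := fun hx hy p hq => (W p).add_mem (hx p hq) (hy p hq)
    zero_mem' := fun p hq => (W p).zero_mem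
    smul_mem' := fun c x hx p hq => (W p).smul_mem c (hx p hq) }

/-- `reach n p` : there is an (undirected) walk of length `n` from `p` into `S0`. -/
def reach (R : Rep K V0 A B) (S0 : Set V0) : ℕ → V0 → Prop
  | 0, p => p ∈ S0
  | (n+1), p => ∃ a : A, (R.src a = p ∧ R.reach S0 n (R.tgt a)) ∨
      (R.tgt a = p ∧ R.reach S0 n (R.src a))

/-- The graph distance from `p` to the vertex set `S0`. -/
def distS (R : Rep K V0 A B) (S0 : Set V0) (p : V0) : ℕ :=
  sInf {n : ℕ | R.reach S0 n p}

/-- The fibre length `ε(p,p')` of a pair of vertices. -/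
def eps [LT B] (R : Rep K V0 A B) (Fv : V0 → QV) (p p' : V0) : ℕ :=
  Set.ncard {p'' : V0 | Fv p'' = Fv p ∧ R.vle p p'' ∧ R.vlt p'' p'}

/-- Lexicographic comparison `Ψ(p,p') < Ψ(q,q')`. -/
def psiLt [LT B] (R : Rep K V0 A B) (S0 : Set V0) (Fv : V0 → QV) (p p' q q' : V0) : Prop :=
  R.eps Fv p p' < R.eps Fv q q' ∨ (R.eps Fv p p' = R.eps Fv q q' ∧
    (max (R.distS S0 p) (R.distS S0 p') < max (R.distS S0 q) (R.distS S0 q') ∨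
     (max (R.distS S0 p) (R.distS S0 p') = max (R.distS S0 q) (R.distS S0 q') ∧
       R.vlt p' q')))

def type0 [LT B] (R : Rep K V0 A B) (Fa : A → QA) (aq : QA) (t s : V0) : Prop :=
  ¬ ∃ α : A, Fa α = aq ∧ R.vle (R.src α) s ∧ R.vle t (R.tgt α)

def type1 (R : Rep K V0 A B) (Fa : A → QA) (aq : QA) (t s : V0) : Prop :=
  ∃ α : A, Fa α = aq ∧ R.src α = s ∧ R.tgt α = t

def type2a [LT B] (R : Rep K V0 A B) (S0 : Set V0) (Fv : V0 → QV) (Fa : A → QA)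
    (aq : QA) (t s : V0) : Prop :=
  ∃ α' α'' : A, Fa α' = aq ∧ Fa α'' = aq ∧ R.tgt α' = t ∧ R.vlt (R.src α') s ∧
    R.src α'' = s ∧ R.vlt (R.tgt α'') t ∧ R.psiLt S0 Fv t (R.tgt α'') (R.src α') s

def type2b [LT B] (R : Rep K V0 A B) (S0 : Set V0) (Fv : V0 → QV) (Fa : A → QA)
    (aq : QA) (t s : V0) : Prop :=
  ∃ α' α'' : A, Fa α' = aq ∧ Fa α'' = aq ∧ R.tgt α' = t ∧ R.vlt (R.src α') s ∧
    R.src α'' = s ∧ R.vlt (R.tgt α'') t ∧ R.psiLt S0 Fv (R.src α') s t (R.tgt α'')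

def type3a [LT B] (R : Rep K V0 A B) (S0 : Set V0) (Fv : V0 → QV) (Fa : A → QA)
    (aq : QA) (t s : V0) : Prop :=
  ∃ α'' : A, Fa α'' = aq ∧ R.src α'' = s ∧ R.vlt t (R.tgt α'') ∧
    (¬ ∃ α : A, Fa α = aq ∧ R.tgt α = t) ∧
    ∀ α : A, Fa α = aq → R.vlt t (R.tgt α) → R.vlt (R.tgt α) (R.tgt α'') →
      R.psiLt S0 Fv (R.src α) s t (R.tgt α'')

def type4a [LT B] (R : Rep K V0 A B) (S0 : Set V0) (Fv : V0 → QV) (Fa : A → QA)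
    (aq : QA) (t s : V0) : Prop :=
  ∃ α' : A, Fa α' = aq ∧ R.tgt α' = t ∧ R.vlt (R.src α') s ∧
    (¬ ∃ α : A, Fa α = aq ∧ R.src α = s) ∧
    ∀ α : A, Fa α = aq → R.vlt (R.src α') (R.src α) → R.vlt (R.src α) s →
      R.psiLt S0 Fv t (R.tgt α) (R.src α') s

/-- `F` is strictly ordered with respect to the ordered basis. -/
def StrictlyOrdered [LT B] (R : Rep K V0 A B) (Fa : A → QA) : Prop :=
  ∀ α α' : A, α ≠ α' → Fa α = Fa α' →
    (R.vlt (R.src α) (R.src α') ∧ R.vlt (R.tgt α) (R.tgt α')) ∨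
    (R.vlt (R.src α') (R.src α) ∧ R.vlt (R.tgt α') (R.tgt α))

/-- The pair `(p, p')` is a relevant pair. -/
def relPair [LT B] (R : Rep K V0 A B) (S0 : Set V0) (Fv : V0 → QV) (p p' : V0) : Prop :=
  Fv p = Fv p' ∧ R.vle p p' ∧ p' ∉ S0

/-- Condition of Hypothesis (H) on outgoing arrows at the relevant pair `(p, p')`. -/
def outOK [LT B] (R : Rep K V0 A B) (S0 : Set V0) (Fv : V0 → QV) (Fa : A → QA)
    (qsrc qtgt : QA → QV) (p p' : V0) (aq : QA) : Prop :=
  qsrc aq = Fv p →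
    ((¬ ∃ α : A, Fa α = aq ∧ R.src α = p') →
      ∀ q : V0, Fv q = qtgt aq → R.type0 Fa aq q p') ∧
    ((∃ α : A, Fa α = aq ∧ R.src α = p') →
      ∃ α : A, Fa α = aq ∧ R.src α = p ∧
        (R.type1 Fa aq (R.tgt α) p' ∨ R.type2b S0 Fv Fa aq (R.tgt α) p'))

/-- Condition of Hypothesis (H) on incoming arrows at the relevant pair `(p, p')`. -/
def inOK [LT B] (R : Rep K V0 A B) (S0 : Set V0) (Fv : V0 → QV) (Fa : A → QA)
    (qsrc qtgt : QA → QV) (p p' : V0) (aq : QA) : Prop :=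
  qtgt aq = Fv p →
    ((¬ ∃ α : A, Fa α = aq ∧ R.tgt α = p) →
      ∀ q' : V0, Fv q' = qsrc aq → R.type0 Fa aq p q') ∧
    ((∃ α : A, Fa α = aq ∧ R.tgt α = p) →
      ∃ α : A, Fa α = aq ∧ R.tgt α = p' ∧
        (R.type1 Fa aq p (R.src α) ∨ R.type2a S0 Fv Fa aq p (R.src α)))

/-- Exceptional situation (1) of Hypothesis (H). -/
def exc1 [LinearOrder B] (R : Rep K V0 A B) (S0 : Set V0) (S1 : Set A) (Fv : V0 → QV)
    (Fa : A → QA) (qsrc : QA → QV) (p p' : V0) (aq : QA) : Prop :=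
  qsrc aq = Fv p ∧ ∃ α : A, Fa α = aq ∧ R.src α = p ∧
    (R.type2a S0 Fv Fa aq (R.tgt α) p' ∨ R.type4a S0 Fv Fa aq (R.tgt α) p') ∧
    (α ∈ S1 → R.IsIdMat α)

/-- Exceptional situation (2) of Hypothesis (H). -/
def exc2 [LT B] (R : Rep K V0 A B) (S0 : Set V0) (Fv : V0 → QV) (Fa : A → QA)
    (qtgt : QA → QV) (p p' : V0) (aq : QA) : Prop :=
  qtgt aq = Fv p ∧ ∃ α : A, Fa α = aq ∧ R.tgt α = p' ∧
    (R.type2b S0 Fv Fa aq p (R.src α) ∨ R.type3a S0 Fv Fa aq p (R.src α))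

/-- Hypothesis (H). -/
def HypH [LinearOrder B] (R : Rep K V0 A B) (S0 : Set V0) (S1 : Set A)
    (qsrc qtgt : QA → QV) (Fv : V0 → QV) (Fa : A → QA) : Prop :=
  R.StrictlyOrdered Fa ∧
  ∀ p p' : V0, R.relPair S0 Fv p p' →
    ((∀ aq : QA, R.outOK S0 Fv Fa qsrc qtgt p p' aq ∧ R.inOK S0 Fv Fa qsrc qtgt p p' aq) ∨
     (∃ aq0 : QA,
        (R.exc1 S0 S1 Fv Fa qsrc p p' aq0 ∨ R.exc2 S0 Fv Fa qtgt p p' aq0) ∧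
        ∀ aq : QA, aq ≠ aq0 →
          R.outOK S0 Fv Fa qsrc qtgt p p' aq ∧ R.inOK S0 Fv Fa qsrc qtgt p p' aq))


end Rep

end QGr

/-! Membership in a Schubert cell is the subrepresentation condition together with one condition
per vertex `p`, and the latter only sees `β ∩ B_p`. Since no arrow joins `S` to `T`, the
subrepresentation condition on `Q` splits into those on `S` and on `T`, so restricting to `S0` and
to `T0` identifies the cell of `M` with the product of the cells of `M_S` and `M_T`. -/

namespace QGr.Rep

variable {K : Type} [Field K] {V0 A B : Type}

section Restriction

variable (R : Rep K V0 A B)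

def subRepEquivProd {S0 T0 : Set V0} (hST : IsCompl S0 T0) :
    R.SubRep ≃ R.SubRepOn S0 × R.SubRepOn T0 where
  toFun W := (R.resOn S0 W, R.resOn T0 W)
  invFun P p :=
    if hp : p ∈ S0 then P.1 ⟨p, hp⟩ else P.2 ⟨p, hST.compl_eq ▸ hp⟩
  left_inv W := by
    funext p
    by_cases hp : p ∈ S0 <;> simp [hp, resOn]
  right_inv P := by
    refine Prod.ext (funext fun p => dif_pos p.2) (funext fun p => ?_)
    exact dif_neg (hST.disjoint.notMem_of_mem_right p.2)

theorem isSubrep_iff_resOn {S0 T0 : Set V0} {S1 T1 : Set A} (hA : S1 ∪ T1 = Set.univ)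
    (hS : ∀ a ∈ S1, R.src a ∈ S0 ∧ R.tgt a ∈ S0)
    (hT : ∀ a ∈ T1, R.src a ∈ T0 ∧ R.tgt a ∈ T0) {W : R.SubRep} :
    R.IsSubrep W ↔
      R.IsSubrepOn S0 S1 (R.resOn S0 W) ∧ R.IsSubrepOn T0 T1 (R.resOn T0 W) := by
  refine ⟨fun hW => ⟨fun a _ _ _ => hW a, fun a _ _ _ => hW a⟩, fun ⟨hWS, hWT⟩ a => ?_⟩
  rcases (Set.eq_univ_iff_forall.mp hA a : a ∈ S1 ∪ T1) with ha | ha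
  · exact hWS a ha (hS a ha).1 (hS a ha).2
  · exact hWT a ha (hT a ha).1 (hT a ha).2

end Restriction

variable [LinearOrder B] (R : Rep K V0 A B)

def IsSchubertAt (β : Finset B) (p : V0) (U : Submodule K ({b : B // R.vtx b = p} → K)) :
    Prop :=
  Module.finrank K U = (β.filter fun b => R.vtx b = p).card ∧
    ∃ v : {b : B // b ∈ β ∧ R.vtx b = p} → ({b : B // R.vtx b = p} → K),
      (∀ b0, v b0 ⟨b0.val, b0.prop.2⟩ = 1) ∧
      (∀ b0 b1, b1.val ≠ b0.val → ¬(b1.val < b0.val ∧ b1.val ∉ β) → v b0 b1 = 0) ∧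
      U = Submodule.span K (Set.range v)

theorem mem_cell_iff {β : Finset B} {W : R.SubRep} :
    W ∈ R.Cell β ↔ R.IsSubrep W ∧ ∀ p, R.IsSchubertAt β p (W p) :=
  and_congr_right fun _ => forall_and.symm

theorem mem_cellOn_iff {S0 : Set V0} {S1 : Set A} {β : Finset B} {W : R.SubRepOn S0} :
    W ∈ R.CellOn S0 S1 β ↔ R.IsSubrepOn S0 S1 W ∧ ∀ p : S0, R.IsSchubertAt β p (W p) :=
  and_congr_right fun _ => forall_and.symm

variable {R}

theorem IsSchubertAt.of_forall_iff {β β' : Finset B} {p : V0}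
    {U : Submodule K ({b : B // R.vtx b = p} → K)} (hU : R.IsSchubertAt β p U)
    (h : ∀ b, R.vtx b = p → (b ∈ β ↔ b ∈ β')) : R.IsSchubertAt β' p U := by
  obtain ⟨hrank, v, hv_one, hv_zero, hspan⟩ := hU
  let e : {b : B // b ∈ β' ∧ R.vtx b = p} ≃ {b : B // b ∈ β ∧ R.vtx b = p} :=
    Equiv.subtypeEquivRight fun b => and_congr_left fun hb => (h b hb).symm
  refine ⟨?_, v ∘ e, fun b0 => hv_one _, fun b0 b1 hne hlt => hv_zero _ b1 hne ?_, ?_⟩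
  · rw [hrank]
    congr 1
    ext b
    simp only [Finset.mem_filter, and_congr_left_iff]
    exact h b
  · rwa [h b1 b1.2]
  · rw [hspan, e.surjective.range_comp]

theorem isSchubertAt_filter_iff {S0 : Set V0} {β : Finset B} {p : V0} (hp : p ∈ S0)
    {U : Submodule K ({b : B // R.vtx b = p} → K)} :
    R.IsSchubertAt (β.filter fun b => R.vtx b ∈ S0) p U ↔ R.IsSchubertAt β p U := by
  have h : ∀ b, R.vtx b = p → (b ∈ β.filter (fun b => R.vtx b ∈ S0) ↔ b ∈ β) :=
    fun b hb => by simp [hb, hp]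
  exact ⟨fun hU => hU.of_forall_iff h, fun hU => hU.of_forall_iff fun b hb => (h b hb).symm⟩

theorem mem_cellOn_filter_iff {S0 : Set V0} {S1 : Set A} {β : Finset B} {W : R.SubRepOn S0} :
    W ∈ R.CellOn S0 S1 (β.filter fun b => R.vtx b ∈ S0) ↔
      R.IsSubrepOn S0 S1 W ∧ ∀ p : S0, R.IsSchubertAt β p (W p) := by
  rw [mem_cellOn_iff]
  exact and_congr_right fun _ => forall_congr' fun p => isSchubertAt_filter_iff p.2

theorem mem_cell_iff_resOn {S0 T0 : Set V0} {S1 T1 : Set A} (hV : S0 ∪ T0 = Set.univ)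
    (hA : S1 ∪ T1 = Set.univ) (hS : ∀ a ∈ S1, R.src a ∈ S0 ∧ R.tgt a ∈ S0)
    (hT : ∀ a ∈ T1, R.src a ∈ T0 ∧ R.tgt a ∈ T0) {β : Finset B} {W : R.SubRep} :
    W ∈ R.Cell β ↔
      R.resOn S0 W ∈ R.CellOn S0 S1 (β.filter fun b => R.vtx b ∈ S0) ∧
        R.resOn T0 W ∈ R.CellOn T0 T1 (β.filter fun b => R.vtx b ∈ T0) := by
  have hvertex : (∀ p, R.IsSchubertAt β p (W p)) ↔
      (∀ p : S0, R.IsSchubertAt β p (W p)) ∧ (∀ p : T0, R.IsSchubertAt β p (W p)) := by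
    refine ⟨fun h => ⟨fun p => h p, fun p => h p⟩, fun ⟨hS0, hT0⟩ p => ?_⟩
    rcases (Set.eq_univ_iff_forall.mp hV p : p ∈ S0 ∪ T0) with hp | hp
    exacts [hS0 ⟨p, hp⟩, hT0 ⟨p, hp⟩]
  rw [mem_cell_iff, mem_cellOn_filter_iff, mem_cellOn_filter_iff, isSubrep_iff_resOn R hA hS hT,
    hvertex]
  exact and_and_and_comm

end QGr.Rep

open QGr in
theorem schubert_cell_of_disjoint_union_general
    {K V0 A B : Type} [Field K] [LinearOrder B]
    (R : Rep K V0 A B)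
    (S0 T0 : Set V0) (S1 T1 : Set A)
    (hV : S0 ∪ T0 = Set.univ) (hVd : Disjoint S0 T0)
    (hA : S1 ∪ T1 = Set.univ)
    (hS : ∀ a ∈ S1, R.src a ∈ S0 ∧ R.tgt a ∈ S0)
    (hT : ∀ a ∈ T1, R.src a ∈ T0 ∧ R.tgt a ∈ T0)
    (β : Finset B) :
    ∃ e : ↥(R.Cell β) ≃
        ↥(R.CellOn S0 S1 (β.filter fun b => R.vtx b ∈ S0)) ×
        ↥(R.CellOn T0 T1 (β.filter fun b => R.vtx b ∈ T0)),
      ∀ W : ↥(R.Cell β),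
        ((e W).1 : R.SubRepOn S0) = R.resOn S0 W.val ∧
        ((e W).2 : R.SubRepOn T0) = R.resOn T0 W.val := by
  have hST : IsCompl S0 T0 := ⟨hVd, codisjoint_iff.mpr hV⟩
  exact ⟨((R.subRepEquivProd hST).subtypeEquiv fun _ =>
      Rep.mem_cell_iff_resOn hV hA hS hT).trans Equiv.subtypeProdEquivProd,
    fun _ => ⟨rfl, rfl⟩⟩

open QGr in
/-- If the quiver `Q` is the disjoint union of two subquivers `S = (S0, S1)`
and `T = (T0, T1)`, then for any representation `M` with ordered basis `B` and any `β ⊆ B`,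
the map `V ↦ ((V_p)_{p ∈ S0}, (V_p)_{p ∈ T0})` is a bijection from the Schubert cell `C_β^M`
onto `C_{β_S}^{M_S} × C_{β_T}^{M_T}`. -/
theorem schubert_cell_of_disjoint_union
    {K V0 A B : Type} [Field K] [Fintype V0] [Fintype A] [Fintype B] [LinearOrder B]
    (R : Rep K V0 A B) (hlin : R.Linear)
    (S0 T0 : Set V0) (S1 T1 : Set A)
    (hV : S0 ∪ T0 = Set.univ) (hVd : Disjoint S0 T0)
    (hA : S1 ∪ T1 = Set.univ) (hAd : Disjoint S1 T1)
    (hS : ∀ a ∈ S1, R.src a ∈ S0 ∧ R.tgt a ∈ S0)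
    (hT : ∀ a ∈ T1, R.src a ∈ T0 ∧ R.tgt a ∈ T0)
    (β : Finset B) :
    ∃ e : ↥(R.Cell β) ≃
        ↥(R.CellOn S0 S1 (β.filter fun b => R.vtx b ∈ S0)) ×
        ↥(R.CellOn T0 T1 (β.filter fun b => R.vtx b ∈ T0)),
      ∀ W : ↥(R.Cell β),
        ((e W).1 : R.SubRepOn S0) = R.resOn S0 W.val ∧
        ((e W).2 : R.SubRepOn T0) = R.resOn T0 W.val :=
  schubert_cell_of_disjoint_union_general R S0 T0 S1 T1 hV hVd hA hS hT β
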